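/- For fixed μ, ν ∈ P₂(ℝ^d), the sequence k ↦ S_k²(μ,ν) is nondecreasing and concave in k, i.e. S_{k+2}² − S_{k+1}² ≤ S_{k+1}² − S_k² for all k ∈ {1,…,d−2}. -/

import Mathlib

noncomputable section
open MeasureTheory Matrix

abbrev Ed (d : ℕ) := EuclideanSpace ℝ (Fin d)

def couplings {d : ℕ} (μ ν : Measure (Ed d)) : Set (Measure (Ed d × Ed d)) :=
  {π | IsProbabilityMeasure π ∧ π.map Prod.fst = μ ∧ π.map Prod.snd = ν}

def transportCost {d : ℕ} (π : Measure (Ed d × Ed d)) : ℝ :=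
  ∫ p, ‖p.1 - p.2‖ ^ 2 ∂π

/-- Squared 2-Wasserstein distance. -/
def W2sq {d : ℕ} (μ ν : Measure (Ed d)) : ℝ :=
  sInf (transportCost '' couplings μ ν)

/-- Second-order displacement matrix `V_π = ∫ (x−y)(x−y)ᵀ dπ`, entrywise. -/
def Vpi {d : ℕ} (π : Measure (Ed d × Ed d)) : Matrix (Fin d) (Fin d) ℝ :=
  Matrix.of fun i j => ∫ p, (p.1 i - p.2 i) * (p.1 j - p.2 j) ∂π

lemma Vpi_isHermitian {d : ℕ} (π : Measure (Ed d × Ed d)) : (Vpi π).IsHermitian := by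
  unfold Matrix.IsHermitian
  ext i j
  simp [Vpi, Matrix.conjTranspose_apply, mul_comm]

/-- Eigenvalues in decreasing order: `eigDesc V h i` is the `(i+1)`-th largest eigenvalue. -/
def eigDesc {d : ℕ} (V : Matrix (Fin d) (Fin d) ℝ) (h : V.IsHermitian) : Fin d → ℝ :=
  fun i => h.eigenvalues (Tuple.sort h.eigenvalues i.rev)

/-- Sum of the `k` largest eigenvalues. -/
def topEigSum {d : ℕ} (k : ℕ) (V : Matrix (Fin d) (Fin d) ℝ) (h : V.IsHermitian) : ℝ :=
  ∑ i ∈ Finset.univ.filter (fun i : Fin d => (i : ℕ) < k), eigDesc V h i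

/-- Squared subspace robust Wasserstein distance:
`S_k²(μ,ν) = inf_{π ∈ Π(μ,ν)} Σ_{l=1}^k λ_l(V_π)`. -/
def SRWsq {d : ℕ} (k : ℕ) (μ ν : Measure (Ed d)) : ℝ :=
  sInf ((fun π => topEigSum k (Vpi π) (Vpi_isHermitian π)) '' couplings μ ν)

/-! For a fixed coupling `π`, `V_π` is the Gram matrix of the displacement coordinates in
`L²(π)`, hence positive semidefinite, so `F_k(π) = Σ_{l ≤ k} λ_l(V_π)` is nondecreasing in `k`;
it is concave in `k` because the eigenvalues are sorted decreasingly. Both properties pass to the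
infimum over couplings: for every `π`, `S_{k+2}² + S_k² ≤ F_{k+2}(π) + F_k(π) ≤ 2 F_{k+1}(π)`. -/

theorem gram_toLp_eq_of_integral_mul {α ι : Type*} [MeasurableSpace α] {π : Measure α}
    (f : ι → α → ℝ) (hf : ∀ i, MemLp (f i) 2 π) :
    gram ℝ (fun i => (hf i).toLp (f i)) = Matrix.of fun i j => ∫ a, f i a * f j a ∂π := by
  ext i j
  rw [gram_apply, L2.inner_def, of_apply]
  refine integral_congr_ae ?_
  filter_upwards [(hf i).coeFn_toLp, (hf j).coeFn_toLp] with a hi hj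
  simp [hi, hj, mul_comm]

theorem posSemidef_of_integral_mul {α ι : Type*} [Finite ι] [MeasurableSpace α]
    {π : Measure α} (f : ι → α → ℝ) (hf : ∀ i, MemLp (f i) 2 π) :
    (Matrix.of fun i j => ∫ a, f i a * f j a ∂π).PosSemidef :=
  gram_toLp_eq_of_integral_mul f hf ▸ posSemidef_gram ℝ _

theorem memLp_two_of_integrable_sq_norm_map {α E : Type*} [MeasurableSpace α] {π : Measure α}
    [NormedAddCommGroup E] [MeasurableSpace E] [OpensMeasurableSpace E] [SecondCountableTopology E]
    {f : α → E} (hf : Measurable f) (h : Integrable (fun x => ‖x‖ ^ 2) (π.map f)) :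
    MemLp f 2 π :=
  (memLp_map_measure_iff aestronglyMeasurable_id hf.aemeasurable).1
    ((memLp_two_iff_integrable_sq_norm aestronglyMeasurable_id).2 h)

section Couplings

variable {d : ℕ} {μ ν : Measure (Ed d)} {π : Measure (Ed d × Ed d)}

theorem memLp_displacement_of_mem_couplings (hπ : π ∈ couplings μ ν)
    (hμ : Integrable (fun x => ‖x‖ ^ 2) μ) (hν : Integrable (fun x => ‖x‖ ^ 2) ν) (i : Fin d) :
    MemLp (fun p : Ed d × Ed d => p.1 i - p.2 i) 2 π := by
  have hfst := memLp_two_of_integrable_sq_norm_map (π := π) measurable_fst (hπ.2.1 ▸ hμ)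
  have hsnd := memLp_two_of_integrable_sq_norm_map (π := π) measurable_snd (hπ.2.2 ▸ hν)
  exact (EuclideanSpace.proj i : Ed d →L[ℝ] ℝ).comp_memLp' (hfst.sub hsnd)

theorem Vpi_posSemidef_of_mem_couplings (hπ : π ∈ couplings μ ν)
    (hμ : Integrable (fun x => ‖x‖ ^ 2) μ) (hν : Integrable (fun x => ‖x‖ ^ 2) ν) :
    (Vpi π).PosSemidef :=
  posSemidef_of_integral_mul _ (memLp_displacement_of_mem_couplings hπ hμ hν)

end Couplings

section TopEigSum

variable {d : ℕ} {V : Matrix (Fin d) (Fin d) ℝ}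

theorem eigDesc_antitone (h : V.IsHermitian) : Antitone (eigDesc V h) := fun _ _ hij =>
  Tuple.monotone_sort h.eigenvalues (Fin.rev_le_rev.mpr hij)

theorem eigDesc_nonneg (hV : V.PosSemidef) (h : V.IsHermitian) (i : Fin d) :
    0 ≤ eigDesc V h i :=
  hV.eigenvalues_nonneg _

theorem topEigSum_nonneg (hV : V.PosSemidef) (h : V.IsHermitian) (k : ℕ) :
    0 ≤ topEigSum k V h :=
  Finset.sum_nonneg fun i _ => eigDesc_nonneg hV h i

theorem topEigSum_le_succ (hV : V.PosSemidef) (h : V.IsHermitian) (k : ℕ) :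
    topEigSum k V h ≤ topEigSum (k + 1) V h :=
  Finset.sum_le_sum_of_subset_of_nonneg (Finset.monotone_filter_right _ fun _ hi => by omega)
    fun i _ _ => eigDesc_nonneg hV h i

theorem topEigSum_succ (h : V.IsHermitian) {k : ℕ} (hk : k < d) :
    topEigSum (k + 1) V h = topEigSum k V h + eigDesc V h ⟨k, hk⟩ := by
  have hfilter : Finset.univ.filter (fun i : Fin d => (i : ℕ) < k + 1)
      = insert ⟨k, hk⟩ (Finset.univ.filter fun i : Fin d => (i : ℕ) < k) := by
    ext i
    simp only [Finset.mem_filter, Finset.mem_univ, true_and, Finset.mem_insert, Fin.ext_iff]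
    omega
  rw [topEigSum, hfilter, Finset.sum_insert (by simp), add_comm, topEigSum]

theorem topEigSum_add_le_two_mul (h : V.IsHermitian) {k : ℕ} (hk : k + 1 < d) :
    topEigSum (k + 2) V h + topEigSum k V h ≤ 2 * topEigSum (k + 1) V h := by
  have hstep : eigDesc V h ⟨k + 1, hk⟩ ≤ eigDesc V h ⟨k, by omega⟩ :=
    eigDesc_antitone h (Fin.mk_le_mk.2 k.le_succ)
  rw [topEigSum_succ h hk, topEigSum_succ h (by omega)]
  linarith

end TopEigSum

theorem csInf_image_mono {α β : Type*} [ConditionallyCompleteLattice β] {s : Set α}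
    {f g : α → β} (hf : BddBelow (f '' s)) (hfg : ∀ x ∈ s, f x ≤ g x) :
    sInf (f '' s) ≤ sInf (g '' s) := by
  rcases s.eq_empty_or_nonempty with rfl | hs
  · simp
  refine le_csInf (hs.image g) ?_
  rintro _ ⟨x, hx, rfl⟩
  exact (csInf_le hf (Set.mem_image_of_mem f hx)).trans (hfg x hx)

theorem csInf_image_add_le_two_mul {α : Type*} {s : Set α} {f g h : α → ℝ}
    (hf : BddBelow (f '' s)) (hh : BddBelow (h '' s)) (hfgh : ∀ x ∈ s, f x + h x ≤ 2 * g x) :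
    sInf (f '' s) + sInf (h '' s) ≤ 2 * sInf (g '' s) := by
  rcases s.eq_empty_or_nonempty with rfl | hs
  · simp
  suffices (sInf (f '' s) + sInf (h '' s)) / 2 ≤ sInf (g '' s) by linarith
  refine le_csInf (hs.image g) ?_
  rintro _ ⟨x, hx, rfl⟩
  have := csInf_le hf (Set.mem_image_of_mem f hx)
  have := csInf_le hh (Set.mem_image_of_mem h hx)
  linarith [hfgh x hx]

theorem SRWsq_mono_concave_general {d : ℕ}
    (μ ν : Measure (Ed d))
    (hμ : Integrable (fun x => ‖x‖ ^ 2) μ) (hν : Integrable (fun x => ‖x‖ ^ 2) ν) :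
    (∀ k : ℕ, 1 ≤ k → k ≤ d - 1 → SRWsq k μ ν ≤ SRWsq (k+1) μ ν) ∧
      (∀ k : ℕ, 1 ≤ k → k ≤ d - 2 →
        SRWsq (k+2) μ ν - SRWsq (k+1) μ ν ≤ SRWsq (k+1) μ ν - SRWsq k μ ν) := by
  have hpsd : ∀ π ∈ couplings μ ν, (Vpi π).PosSemidef := fun π hπ =>
    Vpi_posSemidef_of_mem_couplings hπ hμ hν
  have hbdd : ∀ k, BddBelow ((fun π => topEigSum k (Vpi π) (Vpi_isHermitian π)) ''
      couplings μ ν) := by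
    refine fun k => ⟨0, ?_⟩
    rintro - ⟨π, hπ, rfl⟩
    exact topEigSum_nonneg (hpsd π hπ) _ k
  refine ⟨fun k _ _ => csInf_image_mono (hbdd k) fun π hπ => topEigSum_le_succ (hpsd π hπ) _ k,
    fun k hk₁ hk₂ => ?_⟩
  have hinf := csInf_image_add_le_two_mul (hbdd (k + 2)) (hbdd k) fun π _ =>
    topEigSum_add_le_two_mul (Vpi_isHermitian π) (by omega)
  unfold SRWsq
  linarith

/-- `k ↦ S_k²(μ,ν)` is nondecreasing and concave. -/
theorem SRWsq_mono_concave {d : ℕ}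
    (μ ν : Measure (Ed d)) [IsProbabilityMeasure μ] [IsProbabilityMeasure ν]
    (hμ : Integrable (fun x => ‖x‖ ^ 2) μ) (hν : Integrable (fun x => ‖x‖ ^ 2) ν) :
    (∀ k : ℕ, 1 ≤ k → k ≤ d - 1 → SRWsq k μ ν ≤ SRWsq (k+1) μ ν) ∧
      (∀ k : ℕ, 1 ≤ k → k ≤ d - 2 →
        SRWsq (k+2) μ ν - SRWsq (k+1) μ ν ≤ SRWsq (k+1) μ ν - SRWsq k μ ν) :=
  SRWsq_mono_concave_general μ ν hμ hν
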